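/- Every unit square graph admits a conflict-free 4-coloring. That is, if V is a finite set and p : V → ℝ², then the simple graph on V in which distinct u, v are adjacent if and only if the Chebyshev (ℓ∞) distance between p(u) and p(v) is at most 2 admits a conflict-free 4-coloring. -/

import Mathlib

/-- A conflict-free coloring of `G` with `k` colors: a partial coloring
(uncolored vertices get `none`) such that every vertex has, in its closed
neighborhood, a colored vertex whose color occurs exactly once there. -/
def IsCFColoring {V : Type*} (G : SimpleGraph V) {k : ℕ} (χ : V → Option (Fin k)) : Prop :=
  ∀ v : V, ∃ u ∈ insert v (G.neighborSet v), (χ u).isSome ∧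
    ∀ w ∈ insert v (G.neighborSet v), χ w = χ u → w = u

/-- `G` admits a conflict-free coloring with `k` colors. -/
def HasCFColoring {V : Type*} (G : SimpleGraph V) (k : ℕ) : Prop :=
  ∃ χ : V → Option (Fin k), IsCFColoring G χ

/-- The unit square graph on points `p`: distinct vertices are adjacent iff the
Chebyshev (ℓ∞) distance of their points is at most 2 (the axis-aligned squares
of side length 2 centered at the points intersect). -/
def unitSquareGraph {V : Type*} (p : V → ℝ × ℝ) : SimpleGraph V where
  Adj u v := u ≠ v ∧ max |(p u).1 - (p v).1| |(p u).2 - (p v).2| ≤ 2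
  symm := by
    constructor
    intro u v ⟨h1, h2⟩
    exact ⟨h1.symm, by rwa [abs_sub_comm ((p v).1), abs_sub_comm ((p v).2)]⟩
  loopless := by
    constructor
    intro v ⟨h1, _⟩
    exact h1 rfl

/-!
Cut the plane into the half-open grid cells `[2i, 2i+2) × [2j, 2j+2)`. The points of one cell
are pairwise adjacent, so colouring a single vertex per cell, by the parities of `(i, j)`,
gives every vertex a coloured neighbour in its own cell. No other vertex of its closed
neighbourhood has that colour: a cell of the same parity class but different from it lies
at least one full cell away in some coordinate, hence at Chebyshev distance more than 2.
-/

open Function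

section CliquePartition

variable {V ι κ : Type*} {G : SimpleGraph V}

theorem isCFColoring_of_cliquePartition [Nonempty V] [DecidableEq V] {k : ℕ}
    (cell : V → ι) (col : ι → Fin k)
    (hcell : ∀ v w, v ≠ w → cell v = cell w → G.Adj v w)
    (hcol : ∀ v w, G.Adj v w → col (cell v) = col (cell w) → cell v = cell w) :
    IsCFColoring G fun v => if invFun cell (cell v) = v then some (col (cell v)) else none := by
  intro v
  obtain ⟨u, hu⟩ : ∃ u, invFun cell (cell v) = u := ⟨_, rfl⟩
  have hcell_u : cell u = cell v := hu ▸ invFun_eq ⟨v, rfl⟩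
  have hχu : (if invFun cell (cell u) = u then some (col (cell u)) else none) =
      some (col (cell v)) := by
    rw [hcell_u, if_pos hu]
  refine ⟨u, ?_, by simp only [hχu, Option.isSome_some], fun w hw hχw => ?_⟩
  · rcases eq_or_ne v u with rfl | hvu
    · exact Set.mem_insert _ _
    · exact Or.inr (hcell v u hvu hcell_u.symm)
  dsimp only at hχw
  rw [hχu] at hχw
  split_ifs at hχw with hw_leader
  obtain rfl | hvw : v = w ∨ G.Adj v w := by simpa [eq_comm] using hw
  · exact hw_leader.symm.trans hu
  · have hcell_w : cell v = cell w := hcol v w hvw (Option.some_injective _ hχw).symm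
    rw [← hw_leader, ← hcell_w, hu]

theorem hasCFColoring_of_cliquePartition [Fintype κ] {k : ℕ} (hk : Fintype.card κ ≤ k)
    (cell : V → ι) (col : ι → κ)
    (hcell : ∀ v w, v ≠ w → cell v = cell w → G.Adj v w)
    (hcol : ∀ v w, G.Adj v w → col (cell v) = col (cell w) → cell v = cell w) :
    HasCFColoring G k := by
  classical
  rcases isEmpty_or_nonempty V with hV | hV
  · exact ⟨fun _ => none, fun v => isEmptyElim v⟩
  let e : κ ↪ Fin k := (Fintype.equivFin κ).toEmbedding.trans (Fin.castLEEmb hk)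
  exact ⟨_, isCFColoring_of_cliquePartition cell (e ∘ col) hcell
    fun v w hvw h => hcol v w hvw (e.injective h)⟩

end CliquePartition

section Floor

theorem Int.abs_floor_sub_floor_le_one {R : Type*} [Ring R] [LinearOrder R] [IsStrictOrderedRing R]
    [FloorRing R] {a b : R} (h : |a - b| ≤ 1) : |⌊a⌋ - ⌊b⌋| ≤ 1 := by
  have hab : ⌊a⌋ ≤ ⌊b⌋ + 1 :=
    Int.floor_add_one b ▸ Int.floor_mono (sub_le_iff_le_add'.mp (abs_le.mp h).2)
  have hba : ⌊b⌋ ≤ ⌊a⌋ + 1 :=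
    Int.floor_add_one a ▸ Int.floor_mono (neg_le_sub_iff_le_add.mp (abs_le.mp h).1)
  exact abs_le.mpr ⟨by linarith, by linarith⟩

variable {R : Type*} [Field R] [LinearOrder R] [IsStrictOrderedRing R] [FloorRing R]

theorem abs_sub_lt_of_floor_div_eq {a x y : R} (ha : 0 < a) (h : ⌊x / a⌋ = ⌊y / a⌋) :
    |x - y| < a := by
  have := Int.abs_sub_lt_one_of_floor_eq_floor h
  rwa [← sub_div, abs_div, abs_of_pos ha, div_lt_one ha] at this

theorem abs_floor_div_sub_floor_div_le_one {a x y : R} (ha : 0 < a) (h : |x - y| ≤ a) :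
    |⌊x / a⌋ - ⌊y / a⌋| ≤ 1 := by
  refine Int.abs_floor_sub_floor_le_one ?_
  rwa [← sub_div, abs_div, abs_of_pos ha, div_le_one ha]

end Floor

section UnitSquareGraph

noncomputable def squareCell (q : ℝ × ℝ) : ℤ × ℤ := (⌊q.1 / 2⌋, ⌊q.2 / 2⌋)

def cellParity (c : ℤ × ℤ) : ZMod 2 × ZMod 2 := (c.1, c.2)

theorem Int.eq_of_abs_sub_lt_of_intCast_eq {n : ℕ} {i j : ℤ} (h : |i - j| < n)
    (hij : (i : ZMod n) = j) : i = j := by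
  rw [ZMod.intCast_eq_intCast_iff_dvd_sub] at hij
  exact (sub_eq_zero.mp (Int.eq_zero_of_abs_lt_dvd hij (abs_sub_comm i j ▸ h))).symm

variable {V : Type*} (p : V → ℝ × ℝ)

theorem unitSquareGraph_adj_of_squareCell_eq {u v : V} (huv : u ≠ v)
    (h : squareCell (p u) = squareCell (p v)) : (unitSquareGraph p).Adj u v := by
  simp only [squareCell, Prod.ext_iff] at h
  exact ⟨huv, max_le (abs_sub_lt_of_floor_div_eq two_pos h.1).le
    (abs_sub_lt_of_floor_div_eq two_pos h.2).le⟩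

theorem squareCell_eq_of_adj_of_cellParity_eq {u v : V} (huv : (unitSquareGraph p).Adj u v)
    (h : cellParity (squareCell (p u)) = cellParity (squareCell (p v))) :
    squareCell (p u) = squareCell (p v) := by
  have floor_eq {x y : ℝ} (hxy : |x - y| ≤ 2)
      (hpar : ((⌊x / 2⌋ : ℤ) : ZMod 2) = ⌊y / 2⌋) : ⌊x / 2⌋ = ⌊y / 2⌋ :=
    Int.eq_of_abs_sub_lt_of_intCast_eq
      ((abs_floor_div_sub_floor_div_le_one two_pos hxy).trans_lt one_lt_two) hpar
  obtain ⟨-, hdist⟩ := huv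
  simp only [cellParity, squareCell, Prod.ext_iff] at h ⊢
  exact ⟨floor_eq (le_of_max_le_left hdist) h.1, floor_eq (le_of_max_le_right hdist) h.2⟩

end UnitSquareGraph

theorem stmt11_general {V : Type*} (p : V → ℝ × ℝ) :
    HasCFColoring (unitSquareGraph p) 4 :=
  hasCFColoring_of_cliquePartition (by simp) (squareCell ∘ p) cellParity
    (fun _ _ => unitSquareGraph_adj_of_squareCell_eq p)
    (fun _ _ => squareCell_eq_of_adj_of_cellParity_eq p)

theorem stmt11 {V : Type*} [Fintype V] (p : V → ℝ × ℝ) :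
    HasCFColoring (unitSquareGraph p) 4 :=
  stmt11_general p
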